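/- arXiv:0907.5587 — 4 statements merged into one kernel-verified Lean document; each statement's English description precedes it below -/
import Mathlib

section
/- Let G be a group, let D_a : G →* GL (Fin n_a) ℂ, D_b : G →* GL (Fin n_b) ℂ, D_φ : G →* GL (Fin n_φ) ℂ be matrix representations, and let Γ : Fin n_φ → Matrix (Fin n_a) (Fin n_b) ℂ. For a : Fin n_a → ℂ, b : Fin n_b → ℂ, φ : Fin n_φ → ℂ set y(a,b,φ) := (star a) ⬝ᵥ ((∑ j, φ j • Γ j) *ᵥ b) and Y(a,b,φ) := y(a,b,φ) + star (y(a,b,φ)) (the Yukawa coupling). Then Y is G-invariant, i.e. Y(↑(D_a f) *ᵥ a, ↑(D_b f) *ᵥ b, ↑(D_φ f) *ᵥ φ) = Y(a,b,φ) for all f : G and all a, b, φ, if and only if the invariance equations hold: for every f : G and every k, (↑(D_a f))ᴴ * (∑ j, ((D_φ f) j k) • Γ j) * ↑(D_b f) = Γ k. -/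
/-!
Write `Γ'_k = (D_a f)ᴴ (∑_j (D_φ f)_{jk} Γ_j) (D_b f)`. Substituting the transformed fields
into `y` gives `y_Γ (D_a a, D_b b, D_φ φ) = y_{Γ'} (a, b, φ)`, so invariance says that
`Y_{Γ'} = Y_Γ` identically. Since `Y = 2 Re y` and `y` is conjugate-linear in `a`, replacing
`a` by `i a` recovers `Im y`, so `Y_{Γ'} = Y_Γ` forces `y_{Γ'} = y_Γ`; evaluating `y` on
standard basis vectors then reads off the entries of `Γ'_k` and `Γ_k`.
-/

open Matrix

/-- The bilinear part `y(a,b,φ) = a† (Γ_j φ_j) b` of a Yukawa coupling. -/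
noncomputable def yuk {na nb nφ : ℕ} (Γ : Fin nφ → Matrix (Fin na) (Fin nb) ℂ)
    (a : Fin na → ℂ) (b : Fin nb → ℂ) (φ : Fin nφ → ℂ) : ℂ :=
  star a ⬝ᵥ ((∑ j, φ j • Γ j) *ᵥ b)

/-- The Yukawa coupling `Y(a,b,φ) = y(a,b,φ) + y(a,b,φ)*`. -/
noncomputable def Yukawa {na nb nφ : ℕ} (Γ : Fin nφ → Matrix (Fin na) (Fin nb) ℂ)
    (a : Fin na → ℂ) (b : Fin nb → ℂ) (φ : Fin nφ → ℂ) : ℂ :=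
  yuk Γ a b φ + star (yuk Γ a b φ)

section MatrixIdentities

variable {l m n R : Type*}

theorem Matrix.star_mulVec_dotProduct_mulVec [Fintype m] [Fintype n] [CommSemiring R]
    [StarRing R] (A : Matrix m m R) (M : Matrix m n R) (B : Matrix n n R) (a : m → R)
    (b : n → R) :
    star (A *ᵥ a) ⬝ᵥ (M *ᵥ (B *ᵥ b)) = star a ⬝ᵥ ((Aᴴ * M * B) *ᵥ b) := by
  rw [star_mulVec, ← dotProduct_mulVec, mulVec_mulVec, mulVec_mulVec, Matrix.mul_assoc]

theorem Matrix.sum_mulVec_smul [Fintype l] [CommSemiring R] (P : Matrix l l R)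
    (Γ : l → Matrix m n R) (φ : l → R) :
    ∑ j, (P *ᵥ φ) j • Γ j = ∑ k, φ k • ∑ j, P j k • Γ j := by
  simp only [mulVec, dotProduct, Finset.sum_smul, Finset.smul_sum, smul_smul, mul_comm]
  exact Finset.sum_comm

theorem Matrix.eq_of_forall_star_dotProduct_mulVec_eq [Fintype m] [Fintype n]
    [DecidableEq m] [DecidableEq n] [Semiring R] [StarRing R] {M N : Matrix m n R}
    (h : ∀ a b, star a ⬝ᵥ (M *ᵥ b) = star a ⬝ᵥ (N *ᵥ b)) : M = N := by
  ext i j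
  simpa [mulVec_single, dotProduct, Pi.single_apply, apply_ite star] using
    h (Pi.single i 1) (Pi.single j 1)

end MatrixIdentities

section Yukawa

variable {na nb nφ : ℕ}

def transformCoeffs (A : Matrix (Fin na) (Fin na) ℂ) (B : Matrix (Fin nb) (Fin nb) ℂ)
    (P : Matrix (Fin nφ) (Fin nφ) ℂ) (Γ : Fin nφ → Matrix (Fin na) (Fin nb) ℂ) :
    Fin nφ → Matrix (Fin na) (Fin nb) ℂ :=
  fun k => Aᴴ * (∑ j, P j k • Γ j) * B

theorem yuk_mulVec (Γ : Fin nφ → Matrix (Fin na) (Fin nb) ℂ)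
    (A : Matrix (Fin na) (Fin na) ℂ) (B : Matrix (Fin nb) (Fin nb) ℂ)
    (P : Matrix (Fin nφ) (Fin nφ) ℂ) (a : Fin na → ℂ) (b : Fin nb → ℂ) (φ : Fin nφ → ℂ) :
    yuk Γ (A *ᵥ a) (B *ᵥ b) (P *ᵥ φ) = yuk (transformCoeffs A B P Γ) a b φ := by
  rw [yuk, yuk, sum_mulVec_smul, star_mulVec_dotProduct_mulVec, Matrix.mul_sum, Matrix.sum_mul]
  simp only [transformCoeffs, Matrix.mul_smul, Matrix.smul_mul]

theorem Yukawa_mulVec (Γ : Fin nφ → Matrix (Fin na) (Fin nb) ℂ)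
    (A : Matrix (Fin na) (Fin na) ℂ) (B : Matrix (Fin nb) (Fin nb) ℂ)
    (P : Matrix (Fin nφ) (Fin nφ) ℂ) (a : Fin na → ℂ) (b : Fin nb → ℂ) (φ : Fin nφ → ℂ) :
    Yukawa Γ (A *ᵥ a) (B *ᵥ b) (P *ᵥ φ) = Yukawa (transformCoeffs A B P Γ) a b φ := by
  rw [Yukawa, Yukawa, yuk_mulVec]

theorem yuk_smul_left (Γ : Fin nφ → Matrix (Fin na) (Fin nb) ℂ) (c : ℂ) (a : Fin na → ℂ)
    (b : Fin nb → ℂ) (φ : Fin nφ → ℂ) :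
    yuk Γ (c • a) b φ = star c * yuk Γ a b φ := by
  simp [yuk, star_smul, smul_dotProduct]

theorem Yukawa_eq_two_mul_re (Γ : Fin nφ → Matrix (Fin na) (Fin nb) ℂ) (a : Fin na → ℂ)
    (b : Fin nb → ℂ) (φ : Fin nφ → ℂ) :
    Yukawa Γ a b φ = ((2 * (yuk Γ a b φ).re : ℝ) : ℂ) :=
  Complex.add_conj _

theorem Yukawa_smul_I_left (Γ : Fin nφ → Matrix (Fin na) (Fin nb) ℂ) (a : Fin na → ℂ)
    (b : Fin nb → ℂ) (φ : Fin nφ → ℂ) :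
    Yukawa Γ (Complex.I • a) b φ = ((2 * (yuk Γ a b φ).im : ℝ) : ℂ) := by
  simp [Yukawa_eq_two_mul_re, yuk_smul_left]

theorem Yukawa_eq_iff {Γ Γ' : Fin nφ → Matrix (Fin na) (Fin nb) ℂ} :
    (∀ a b φ, Yukawa Γ a b φ = Yukawa Γ' a b φ) ↔ Γ = Γ' := by
  refine ⟨fun h => ?_, fun h => by simp [h]⟩
  have hyuk : ∀ a b φ, yuk Γ a b φ = yuk Γ' a b φ := fun a b φ => by
    have hre := h a b φ
    have him := h (Complex.I • a) b φ
    rw [Yukawa_eq_two_mul_re, Yukawa_eq_two_mul_re] at hre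
    rw [Yukawa_smul_I_left, Yukawa_smul_I_left] at him
    apply Complex.ext <;> norm_cast at hre him <;> linarith
  funext k
  refine eq_of_forall_star_dotProduct_mulVec_eq fun a b => ?_
  simpa [yuk, Pi.single_apply] using hyuk a b (Pi.single k 1)

end Yukawa

/-- A Yukawa coupling is invariant under the representations `D_a`, `D_b`, `D_φ` of a
group `G` if and only if the coefficient matrices `Γ_k` satisfy the invariance equations
`(D_a f)ᴴ Γ_j (D_φ f)_{jk} (D_b f) = Γ_k` for all `f ∈ G` and all `k`. -/
theorem yukawa_invariant_iff_invariance_equations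
    (G : Type*) [Group G] (na nb nφ : ℕ)
    (Da : G →* GL (Fin na) ℂ) (Db : G →* GL (Fin nb) ℂ) (Dφ : G →* GL (Fin nφ) ℂ)
    (Γ : Fin nφ → Matrix (Fin na) (Fin nb) ℂ) :
    (∀ (f : G) (a : Fin na → ℂ) (b : Fin nb → ℂ) (φ : Fin nφ → ℂ),
        Yukawa Γ ((Da f : Matrix (Fin na) (Fin na) ℂ) *ᵥ a)
          ((Db f : Matrix (Fin nb) (Fin nb) ℂ) *ᵥ b)
          ((Dφ f : Matrix (Fin nφ) (Fin nφ) ℂ) *ᵥ φ) = Yukawa Γ a b φ) ↔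
    (∀ (f : G) (k : Fin nφ),
        (Da f : Matrix (Fin na) (Fin na) ℂ)ᴴ *
          (∑ j, (Dφ f : Matrix (Fin nφ) (Fin nφ) ℂ) j k • Γ j) *
          (Db f : Matrix (Fin nb) (Fin nb) ℂ) = Γ k) := by
  refine forall_congr' fun f => ?_
  simp only [Yukawa_mulVec]
  exact Yukawa_eq_iff.trans funext_iff
end

section
/- Let G be a finite group and A a finite commutative group, and suppose there is an injective group homomorphism φ : G × A →* Matrix.specialUnitaryGroup (Fin 3) ℂ whose image acts irreducibly on ℂ³, i.e. the only ℂ-submodules W of (Fin 3 → ℂ) satisfying (↑(φ x)) *ᵥ v ∈ W for every x : G × A and v ∈ W are W = ⊥ and W = ⊤. Then A is isomorphic to the cyclic group of order 3 or to the trivial group: Nat.card A = 1 ∨ Nat.card A = 3. -/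
open Matrix

/-!
Every `φ (1, a)` commutes with the whole irreducible image of `φ`, so by Schur's lemma it is a
scalar matrix `c • 1`, and `det (c • 1) = c ^ 3 = 1`. Hence `a ↦ c` embeds `A` into the cube roots
of unity in `ℂ`, a group of order `3`, and `Nat.card A ∣ 3`.
-/

theorem Matrix.exists_eq_smul_one_of_forall_commute {ι n K : Type*} [Fintype n] [DecidableEq n]
    [Field K] [IsAlgClosed K] (ρ : ι → Matrix n n K)
    (hirr : ∀ W : Submodule K (n → K), (∀ i v, v ∈ W → ρ i *ᵥ v ∈ W) → W = ⊥ ∨ W = ⊤)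
    {M : Matrix n n K} (hM : ∀ i, Commute M (ρ i)) : ∃ c : K, M = c • 1 := by
  cases isEmpty_or_nonempty n
  · exact ⟨0, Subsingleton.elim _ _⟩
  obtain ⟨c, hc⟩ := Module.End.exists_eigenvalue (toLin' M)
  have hinv : ∀ i v, v ∈ Module.End.eigenspace (toLin' M) c →
      ρ i *ᵥ v ∈ Module.End.eigenspace (toLin' M) c :=
    fun i v hv => Module.End.mapsTo_genEigenspace_of_comm ((hM i).map toLinAlgEquiv') c 1 hv
  have htop := (hirr _ hinv).resolve_left hc
  refine ⟨c, toLin'.injective (LinearMap.ext fun v => ?_)⟩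
  have hv : v ∈ Module.End.eigenspace (toLin' M) c := htop ▸ Submodule.mem_top
  simpa using Module.End.mem_eigenspace_iff.mp hv

theorem Matrix.card_dvd_of_injective_of_forall_eq_smul_one {n H : Type*} [Fintype n]
    [DecidableEq n] [Nonempty n] [Group H] (ρ : H →* Matrix n n ℂ) (hρ : Function.Injective ρ)
    (hdet : ∀ x, (ρ x).det = 1) (hscalar : ∀ x, ∃ c : ℂ, ρ x = c • 1) :
    Nat.card H ∣ Fintype.card n := by
  obtain ⟨i⟩ := ‹Nonempty n›
  have hρ_eq : ∀ x, ρ x = ρ x i i • 1 := fun x => by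
    obtain ⟨c, hc⟩ := hscalar x
    simp [hc]
  let χ : H →* ℂ :=
    { toFun := fun x => ρ x i i
      map_one' := by simp
      map_mul' := fun x y => by rw [map_mul, hρ_eq x, hρ_eq y]; simp [mul_comm] }
  have hχ : ∀ x, χ.toHomUnits x ∈ rootsOfUnity (Fintype.card n) ℂ := fun x => by
    rw [mem_rootsOfUnity, Units.ext_iff]
    calc ρ x i i ^ Fintype.card n = (ρ x i i • 1 : Matrix n n ℂ).det := by simp
      _ = 1 := by rw [← hρ_eq, hdet]
  have hinj : Function.Injective (χ.toHomUnits.codRestrict _ hχ) := fun x y hxy => hρ <| by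
    rw [hρ_eq x, hρ_eq y]
    simpa [Subtype.ext_iff, Units.ext_iff, χ] using hxy
  exact Complex.card_rootsOfUnity (Fintype.card n) ▸ Subgroup.card_dvd_of_injective _ hinj

theorem abelian_factor_of_irreducible_SU3_general
    (G A : Type*) [Group G] [CommGroup A]
    (φ : G × A →* Matrix.specialUnitaryGroup (Fin 3) ℂ)
    (hinj : Function.Injective φ)
    (hirr : ∀ W : Submodule ℂ (Fin 3 → ℂ),
      (∀ (x : G × A) (v : Fin 3 → ℂ), v ∈ W →
        ((φ x : Matrix.specialUnitaryGroup (Fin 3) ℂ) : Matrix (Fin 3) (Fin 3) ℂ) *ᵥ v ∈ W) →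
      W = ⊥ ∨ W = ⊤) :
    Nat.card A = 1 ∨ Nat.card A = 3 := by
  let ρ : A →* Matrix (Fin 3) (Fin 3) ℂ :=
    (specialUnitaryGroup (Fin 3) ℂ).subtype.comp (φ.comp (MonoidHom.inr G A))
  have hρ : Function.Injective ρ :=
    Subtype.val_injective.comp (hinj.comp (Prod.mk_right_injective 1))
  have hcentral : ∀ (a : A) (x : G × A), Commute (1, a) x := fun _ _ =>
    Prod.ext (Commute.one_left _) (Commute.all _ _)
  have hscalar : ∀ a, ∃ c : ℂ, ρ a = c • 1 := fun a =>
    exists_eq_smul_one_of_forall_commute _ hirr fun x =>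
      ((hcentral a x).map φ).map (specialUnitaryGroup (Fin 3) ℂ).subtype
  have hdet : ∀ a, (ρ a).det = 1 := fun a => (mem_specialUnitaryGroup_iff.mp (φ (1, a)).2).2
  exact Nat.prime_three.eq_one_or_self_of_dvd _ <| by
    simpa using card_dvd_of_injective_of_forall_eq_smul_one ρ hρ hdet hscalar

/-- If a direct product `G × A` of a finite group `G` with a finite commutative group
`A` embeds into `SU(3)` with irreducible image, then `A` is isomorphic to the trivial
group or to the cyclic group of order `3`. -/
theorem abelian_factor_of_irreducible_SU3
    (G A : Type*) [Group G] [Finite G] [CommGroup A] [Finite A]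
    (φ : G × A →* Matrix.specialUnitaryGroup (Fin 3) ℂ)
    (hinj : Function.Injective φ)
    (hirr : ∀ W : Submodule ℂ (Fin 3 → ℂ),
      (∀ (x : G × A) (v : Fin 3 → ℂ), v ∈ W →
        ((φ x : Matrix.specialUnitaryGroup (Fin 3) ℂ) : Matrix (Fin 3) (Fin 3) ℂ) *ᵥ v ∈ W) →
      W = ⊥ ∨ W = ⊤) :
    Nat.card A = 1 ∨ Nat.card A = 3 :=
  abelian_factor_of_irreducible_SU3_general G A φ hinj hirr
end

section
/- Let SO3 denote the subgroup of Matrix.orthogonalGroup (Fin 3) ℝ consisting of the elements of determinant 1. There exists a group homomorphism φ : Matrix.specialUnitaryGroup (Fin 2) ℂ →* SO3 which is surjective and is '2 to 1': its kernel consists exactly of the two elements ±𝟙, i.e. for every U, φ U = 1 ↔ ((↑U : Matrix (Fin 2) (Fin 2) ℂ) = 1 ∨ (↑U : Matrix (Fin 2) (Fin 2) ℂ) = -1). -/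
open Matrix

/-- `SO3` is the subgroup of the orthogonal group `O(3)` consisting of the elements of
determinant `1`. -/
def SO3 : Subgroup (Matrix.orthogonalGroup (Fin 3) ℝ) where
  carrier := {R | (R : Matrix (Fin 3) (Fin 3) ℝ).det = 1}
  one_mem' := by simp
  mul_mem' := by
    intro a b ha hb
    simp only [Set.mem_setOf_eq] at *
    rw [Matrix.UnitaryGroup.mul_val, Matrix.det_mul, ha, hb, mul_one]
  inv_mem' := by
    intro a ha
    simp only [Set.mem_setOf_eq] at *
    rw [Matrix.UnitaryGroup.inv_val, Matrix.star_eq_conjTranspose,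
      Matrix.det_conjTranspose, ha, star_one]

/-!
Writing a quaternion as `q = α + β j` with `α β : ℂ`, the map `q ↦ !![α, β; -β̄, ᾱ]`
identifies the unit quaternions with `SU(2)`. A unit quaternion acts on the pure
quaternions `≅ ℝ³` by `v ↦ q v q̄`; its matrix is orthogonal of determinant `‖q‖⁶ = 1`,
and it is the identity only for real `q`, i.e. `q = ±1`. Every `A ∈ SO(3)` arises: some
unit quaternion `q₁` carries `e₃` to `A e₃`, so `q̄₁ A` fixes `e₃` and is a rotation about
`e₃` by an angle `θ`, which comes from `cos (θ/2) + sin (θ/2) k`.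
-/

open Quaternion

namespace Quaternion

section CommRing

variable {R : Type*} [CommRing R]

theorem normSq_mk (w x y z : R) :
    normSq (⟨w, x, y, z⟩ : ℍ[R]) = w ^ 2 + x ^ 2 + y ^ 2 + z ^ 2 :=
  normSq_def' _

/-- The matrix of `v ↦ q * v * star q` on the pure quaternions, in the basis `i, j, k`. -/
def rotationMatrix : ℍ[R] →* Matrix (Fin 3) (Fin 3) R where
  toFun q := let w := q.re; let x := q.imI; let y := q.imJ; let z := q.imK
    !![w^2 + x^2 - y^2 - z^2, 2 * (x*y - w*z), 2 * (x*z + w*y);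
       2 * (x*y + w*z), w^2 - x^2 + y^2 - z^2, 2 * (y*z - w*x);
       2 * (x*z - w*y), 2 * (y*z + w*x), w^2 - x^2 - y^2 + z^2]
  map_one' := by ext i j; fin_cases i <;> fin_cases j <;> simp
  map_mul' q r := by
    ext i j
    simp only [mul_apply, Fin.sum_univ_three]
    fin_cases i <;> fin_cases j <;> simp [re_mul, imI_mul, imJ_mul, imK_mul] <;> ring

theorem rotationMatrix_star (q : ℍ[R]) : rotationMatrix (star q) = (rotationMatrix q)ᵀ := by
  ext i j; fin_cases i <;> fin_cases j <;> simp [rotationMatrix] <;> ring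

theorem det_rotationMatrix (q : ℍ[R]) : (rotationMatrix q).det = normSq q ^ 3 := by
  simp [rotationMatrix, det_fin_three, normSq_def']; ring

theorem rotationMatrix_mem_orthogonalGroup {q : ℍ[R]} (hq : normSq q = 1) :
    rotationMatrix q ∈ orthogonalGroup (Fin 3) R := by
  rw [mem_orthogonalGroup_iff', ← rotationMatrix_star, ← map_mul, star_mul_self, hq, coe_one,
    map_one]

end CommRing

theorem rotationMatrix_eq_one_iff {K : Type*} [Field K] [LinearOrder K] [IsStrictOrderedRing K]
    {q : ℍ[K]} (hq : normSq q = 1) : rotationMatrix q = 1 ↔ q = 1 ∨ q = -1 := by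
  refine ⟨fun h => ?_, ?_⟩
  · have h00 : q.re ^ 2 + q.imI ^ 2 - q.imJ ^ 2 - q.imK ^ 2 = 1 := by
      simpa [rotationMatrix] using congr_fun₂ h 0 0
    have h11 : q.re ^ 2 - q.imI ^ 2 + q.imJ ^ 2 - q.imK ^ 2 = 1 := by
      simpa [rotationMatrix] using congr_fun₂ h 1 1
    have h22 : q.re ^ 2 - q.imI ^ 2 - q.imJ ^ 2 + q.imK ^ 2 = 1 := by
      simpa [rotationMatrix] using congr_fun₂ h 2 2
    rw [normSq_def'] at hq
    have hx : q.imI = 0 := by nlinarith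
    have hy : q.imJ = 0 := by nlinarith
    have hz : q.imK = 0 := by nlinarith
    rcases sq_eq_one_iff.mp (show q.re ^ 2 = 1 by nlinarith) with hw | hw
    · left; ext <;> simp [hw, hx, hy, hz]
    · right; ext <;> simp [hw, hx, hy, hz]
  · rintro (rfl | rfl) <;> ext i j <;> fin_cases i <;> fin_cases j <;> simp [rotationMatrix]

theorem exists_rotationMatrix_mulVec_single_two_eq {v : Fin 3 → ℝ} (hv : v ⬝ᵥ v = 1) :
    ∃ q : ℍ[ℝ], normSq q = 1 ∧ rotationMatrix q *ᵥ Pi.single 2 1 = v := by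
  simp only [dotProduct, Fin.sum_univ_three] at hv
  simp only [mulVec_single_one]
  by_cases hc : v 2 = -1
  · refine ⟨⟨0, 0, 1, 0⟩, by simp [normSq_mk], ?_⟩
    have h0 : v 0 = 0 := by nlinarith
    have h1 : v 1 = 0 := by nlinarith
    ext i; fin_cases i <;> simp [rotationMatrix, h0, h1, hc]
  · have hpos : 0 < 1 + v 2 := by
      contrapose! hc
      nlinarith
    -- `q` is `(1 + v 2) + e₃ × v` normalised, the half-way rotation from `e₃` to `v`
    set w := √((1 + v 2) / 2)
    have hw : 0 < w := Real.sqrt_pos.mpr (by linarith)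
    have hw2 : w ^ 2 = (1 + v 2) / 2 := Real.sq_sqrt (by linarith)
    refine ⟨⟨w, -v 1 / (2 * w), v 0 / (2 * w), 0⟩, ?_, ?_⟩
    · rw [normSq_mk, div_pow, div_pow, mul_pow, hw2]
      field_simp
      linear_combination hv
    · ext i; fin_cases i <;> simp [rotationMatrix] <;> field_simp
      linear_combination (4 * w ^ 2 + 2 - 2 * v 2) * hw2 - hv

end Quaternion

namespace Matrix

def rotationZ {R : Type*} [Ring R] (a b : R) : Matrix (Fin 3) (Fin 3) R :=
  !![a, -b, 0; b, a, 0; 0, 0, 1]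

theorem exists_eq_rotationZ_of_mulVec_single_two {R : Type*} [CommRing R]
    {T : Matrix (Fin 3) (Fin 3) R} (hT : T ∈ orthogonalGroup (Fin 3) R) (hdet : T.det = 1)
    (he : T *ᵥ Pi.single 2 1 = Pi.single 2 1) :
    ∃ a b : R, a ^ 2 + b ^ 2 = 1 ∧ T = rotationZ a b := by
  rw [mem_orthogonalGroup_iff'] at hT
  rw [mulVec_single_one] at he
  have hcol (i : Fin 3) : T i 2 = (Pi.single 2 1 : Fin 3 → R) i := congr_fun he i
  have horth (i j : Fin 3) : ∑ k, T k i * T k j = (1 : Matrix (Fin 3) (Fin 3) R) i j := by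
    simpa [mul_apply] using congr_fun₂ hT i j
  obtain ⟨h02, h12, h22⟩ : T 0 2 = 0 ∧ T 1 2 = 0 ∧ T 2 2 = 1 := by
    simpa using And.intro (hcol 0) (And.intro (hcol 1) (hcol 2))
  have h20 : T 2 0 = 0 := by simpa [Fin.sum_univ_three, h02, h12, h22] using horth 0 2
  have h21 : T 2 1 = 0 := by simpa [Fin.sum_univ_three, h02, h12, h22] using horth 1 2
  have h00 : T 0 0 ^ 2 + T 1 0 ^ 2 = 1 := by simpa [Fin.sum_univ_three, h20, sq] using horth 0 0
  have h01 : T 0 0 * T 0 1 + T 1 0 * T 1 1 = 0 := by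
    simpa [Fin.sum_univ_three, h20, h21] using horth 0 1
  have hdet' : T 0 0 * T 1 1 - T 0 1 * T 1 0 = 1 := by
    simpa [det_fin_three, h02, h12, h22, h20, h21] using hdet
  -- the upper-left block has orthonormal columns and determinant `1`
  have h11 : T 1 1 = T 0 0 := by
    linear_combination (-T 1 1) * h00 + T 1 0 * h01 + T 0 0 * hdet'
  have h01' : T 0 1 = -T 1 0 := by
    linear_combination (-T 0 1) * h00 + T 0 0 * h01 - T 1 0 * hdet'
  refine ⟨T 0 0, T 1 0, h00, ?_⟩
  ext i j; fin_cases i <;> fin_cases j <;> simp [rotationZ, h02, h12, h22, h20, h21, h11, h01']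

end Matrix

namespace Quaternion

theorem exists_rotationMatrix_eq_rotationZ {a b : ℝ} (h : a ^ 2 + b ^ 2 = 1) :
    ∃ q : ℍ[ℝ], normSq q = 1 ∧ rotationMatrix q = rotationZ a b := by
  -- `u = cos (θ/2) + i sin (θ/2)` when `a + b i = cos θ + i sin θ`
  obtain ⟨u, hu⟩ := IsAlgClosed.exists_eq_mul_self (⟨a, b⟩ : ℂ)
  have hre : a = u.re ^ 2 - u.im ^ 2 := by simpa [Complex.ext_iff, sq] using congrArg Complex.re hu
  have him : b = 2 * u.re * u.im := by
    linear_combination (by simpa using congrArg Complex.im hu : b = u.re * u.im + u.im * u.re)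
  have hnorm : u.re ^ 2 + u.im ^ 2 = 1 := by
    refine (pow_eq_one_iff_of_nonneg (by positivity) two_ne_zero).mp ?_
    rw [← h, hre, him]; ring
  refine ⟨⟨u.re, 0, 0, u.im⟩, by simpa [normSq_mk] using hnorm, ?_⟩
  ext i j
  fin_cases i <;> fin_cases j <;> simp [rotationMatrix, rotationZ, hre, him, hnorm, mul_assoc]

theorem exists_rotationMatrix_eq {A : Matrix (Fin 3) (Fin 3) ℝ}
    (hA : A ∈ orthogonalGroup (Fin 3) ℝ) (hdet : A.det = 1) :
    ∃ q : ℍ[ℝ], normSq q = 1 ∧ rotationMatrix q = A := by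
  set e : Fin 3 → ℝ := Pi.single 2 1
  have hAe : (A *ᵥ e) ⬝ᵥ (A *ᵥ e) = 1 := by
    rw [dotProduct_mulVec, ← mulVec_transpose, mulVec_mulVec,
      (mem_orthogonalGroup_iff' (A := A)).mp hA, one_mulVec]
    simp [e]
  obtain ⟨q, hq, hqe⟩ := exists_rotationMatrix_mulVec_single_two_eq hAe
  have hq_star : star q * q = 1 := by rw [star_mul_self, hq, coe_one]
  set T := rotationMatrix (star q) * A
  have hT : T ∈ orthogonalGroup (Fin 3) ℝ :=
    mul_mem (rotationMatrix_mem_orthogonalGroup (by rw [normSq_star, hq])) hA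
  have hTdet : T.det = 1 := by simp [T, det_mul, det_rotationMatrix, hq, hdet]
  have hTe : T *ᵥ e = e := by
    rw [← mulVec_mulVec, ← hqe, mulVec_mulVec, ← map_mul, hq_star, map_one, one_mulVec]
  obtain ⟨a, b, hab, hTab⟩ := exists_eq_rotationZ_of_mulVec_single_two hT hTdet hTe
  obtain ⟨r, hr, hrT⟩ := exists_rotationMatrix_eq_rotationZ hab
  refine ⟨q * r, by rw [map_mul, hq, hr, one_mul], ?_⟩
  rw [map_mul, hrT, ← hTab, ← mul_assoc, ← map_mul, self_mul_star, hq, coe_one, map_one, one_mul]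

end Quaternion

theorem Matrix.star_eq_adjugate_of_mem_specialUnitaryGroup {n α : Type*} [Fintype n]
    [DecidableEq n] [CommRing α] [StarRing α] {A : Matrix n n α}
    (hA : A ∈ specialUnitaryGroup n α) : star A = A.adjugate := by
  obtain ⟨hU, hdet⟩ := mem_specialUnitaryGroup_iff.mp hA
  calc star A = star A * (A * A.adjugate) := by rw [mul_adjugate, hdet, one_smul, mul_one]
    _ = A.adjugate := by rw [← mul_assoc, mem_unitaryGroup_iff'.mp hU, one_mul]

namespace Quaternion

def toComplexMatrix : ℍ[ℝ] →+* Matrix (Fin 2) (Fin 2) ℂ where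
  toFun q := let α : ℂ := ⟨q.re, q.imI⟩; let β : ℂ := ⟨q.imJ, q.imK⟩
    !![α, β; -star β, star α]
  map_one' := by ext i j; fin_cases i <;> fin_cases j <;> simp [Complex.ext_iff]
  map_mul' q r := by
    ext i j
    simp only [mul_apply, Fin.sum_univ_two]
    fin_cases i <;> fin_cases j <;>
      simp [Complex.ext_iff, re_mul, imI_mul, imJ_mul, imK_mul] <;> constructor <;> ring
  map_zero' := by ext i j; fin_cases i <;> fin_cases j <;> simp [Complex.ext_iff]
  map_add' q r := by ext i j; fin_cases i <;> fin_cases j <;> simp [Complex.ext_iff] <;> ring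

theorem toComplexMatrix_star (q : ℍ[ℝ]) :
    toComplexMatrix (star q) = star (toComplexMatrix q) := by
  ext i j; fin_cases i <;> fin_cases j <;> simp [toComplexMatrix, Complex.ext_iff]

theorem det_toComplexMatrix (q : ℍ[ℝ]) : (toComplexMatrix q).det = normSq q := by
  simp [toComplexMatrix, det_fin_two, normSq_def', Complex.ext_iff, sq]
  constructor <;> ring

theorem toComplexMatrix_mem_specialUnitaryGroup {q : ℍ[ℝ]} (hq : normSq q = 1) :
    toComplexMatrix q ∈ specialUnitaryGroup (Fin 2) ℂ := by
  refine mem_specialUnitaryGroup_iff.mpr ⟨mem_unitaryGroup_iff.mpr ?_, ?_⟩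
  · rw [← toComplexMatrix_star, ← map_mul, self_mul_star, hq, coe_one, map_one]
  · rw [det_toComplexMatrix, hq, Complex.ofReal_one]

def ofComplexMatrix (A : Matrix (Fin 2) (Fin 2) ℂ) : ℍ[ℝ] :=
  ⟨(A 0 0).re, (A 0 0).im, (A 0 1).re, (A 0 1).im⟩

theorem toComplexMatrix_ofComplexMatrix {A : Matrix (Fin 2) (Fin 2) ℂ}
    (hA : A ∈ specialUnitaryGroup (Fin 2) ℂ) : toComplexMatrix (ofComplexMatrix A) = A := by
  have h := star_eq_adjugate_of_mem_specialUnitaryGroup hA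
  rw [adjugate_fin_two] at h
  have h00 : star (A 0 0) = A 1 1 := by simpa using congr_fun₂ h 0 0
  have h10 : A 1 0 = -star (A 0 1) := by
    simpa using congr_arg star (congr_fun₂ h 0 1)
  ext i j; fin_cases i <;> fin_cases j <;> simp [toComplexMatrix, ofComplexMatrix, ← h00, h10]

end Quaternion

namespace Matrix.specialUnitaryGroup

def toQuaternion : specialUnitaryGroup (Fin 2) ℂ →* ℍ[ℝ] where
  toFun U := ofComplexMatrix U
  map_one' := by ext <;> simp [ofComplexMatrix]
  map_mul' U V := toComplexMatrix.injective <| by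
    rw [map_mul, toComplexMatrix_ofComplexMatrix U.2, toComplexMatrix_ofComplexMatrix V.2,
      toComplexMatrix_ofComplexMatrix (U * V).2, Submonoid.coe_mul]

theorem toQuaternion_eq_iff (U : specialUnitaryGroup (Fin 2) ℂ) (q : ℍ[ℝ]) :
    toQuaternion U = q ↔ (U : Matrix (Fin 2) (Fin 2) ℂ) = toComplexMatrix q := by
  rw [← toComplexMatrix.injective.eq_iff]
  exact Eq.congr_left (toComplexMatrix_ofComplexMatrix U.2)

theorem normSq_toQuaternion (U : specialUnitaryGroup (Fin 2) ℂ) :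
    normSq (toQuaternion U) = 1 := by
  have h := det_toComplexMatrix (toQuaternion U)
  rw [← (toQuaternion_eq_iff U _).mp rfl, (mem_specialUnitaryGroup_iff.mp U.2).2] at h
  exact_mod_cast h.symm

noncomputable def toSO3 : specialUnitaryGroup (Fin 2) ℂ →* SO3 :=
  ((rotationMatrix.comp toQuaternion).codRestrict (orthogonalGroup (Fin 3) ℝ) fun U =>
      rotationMatrix_mem_orthogonalGroup (normSq_toQuaternion U)).codRestrict SO3 fun U => by
    show (rotationMatrix (toQuaternion U)).det = 1
    rw [det_rotationMatrix, normSq_toQuaternion, one_pow]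

theorem toSO3_surjective : Function.Surjective toSO3 := by
  rintro ⟨⟨A, hA⟩, hdet⟩
  obtain ⟨q, hq, rfl⟩ := exists_rotationMatrix_eq hA hdet
  let U : specialUnitaryGroup (Fin 2) ℂ :=
    ⟨toComplexMatrix q, toComplexMatrix_mem_specialUnitaryGroup hq⟩
  have hU : toQuaternion U = q := (toQuaternion_eq_iff U q).mpr rfl
  exact ⟨U, by ext : 2; simp [toSO3, hU]⟩

theorem toSO3_eq_one_iff (U : specialUnitaryGroup (Fin 2) ℂ) :
    toSO3 U = 1 ↔ (U : Matrix (Fin 2) (Fin 2) ℂ) = 1 ∨ (U : Matrix (Fin 2) (Fin 2) ℂ) = -1 := by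
  have h : toSO3 U = 1 ↔ rotationMatrix (toQuaternion U) = 1 := by
    simp [toSO3, Subtype.ext_iff]
  rw [h, rotationMatrix_eq_one_iff (normSq_toQuaternion U), toQuaternion_eq_iff,
    toQuaternion_eq_iff, map_neg, map_one]

end Matrix.specialUnitaryGroup

/-- **The 2-to-1 homomorphism from SU(2) onto SO(3).**
There is a surjective group homomorphism `φ : SU(2) → SO(3)` whose kernel consists
exactly of the two elements `±𝟙`. -/
theorem exists_two_to_one_hom_SU2_to_SO3 :
    ∃ φ : Matrix.specialUnitaryGroup (Fin 2) ℂ →* SO3,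
      Function.Surjective φ ∧
      ∀ U : Matrix.specialUnitaryGroup (Fin 2) ℂ,
        φ U = 1 ↔ ((U : Matrix (Fin 2) (Fin 2) ℂ) = 1 ∨
          (U : Matrix (Fin 2) (Fin 2) ℂ) = -1) :=
  ⟨specialUnitaryGroup.toSO3, specialUnitaryGroup.toSO3_surjective,
    specialUnitaryGroup.toSO3_eq_one_iff⟩
end

section
/- For x : Fin 4 → ℝ define the Hermitian matrix X x := ((x 0 : ℝ) : ℂ) • (1 : Matrix (Fin 2) (Fin 2) ℂ) - ((x 1 : ℝ) : ℂ) • σ₁ - ((x 2 : ℝ) : ℂ) • σ₂ - ((x 3 : ℝ) : ℂ) • σ₃, and let η := Matrix.diagonal ![1, -1, -1, -1] : Matrix (Fin 4) (Fin 4) ℝ be the Minkowski metric. Then: (a) for every A : Matrix (Fin 2) (Fin 2) ℂ with A.det = 1 there exists a unique real matrix L_A : Matrix (Fin 4) (Fin 4) ℝ such that A * X x * Aᴴ = X (L_A *ᵥ x) for all x : Fin 4 → ℝ; (b) this L_A is a Lorentz transformation, L_Aᵀ * η * L_A = η; and (c) the assignment is multiplicative: if A, B both have determinant 1 then L_{A*B}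 = L_A * L_B. -/
open Matrix

/-- The first Pauli matrix. -/
def σ₁ : Matrix (Fin 2) (Fin 2) ℂ := !![0, 1; 1, 0]

/-- The second Pauli matrix. -/
def σ₂ : Matrix (Fin 2) (Fin 2) ℂ := !![0, -Complex.I; Complex.I, 0]

/-- The third Pauli matrix. -/
def σ₃ : Matrix (Fin 2) (Fin 2) ℂ := !![1, 0; 0, -1]

/-- The Hermitian matrix `X x = x⁰ • 1 - x¹ • σ₁ - x² • σ₂ - x³ • σ₃` associated to a
four-vector `x`. -/
noncomputable def X (x : Fin 4 → ℝ) : Matrix (Fin 2) (Fin 2) ℂ :=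
  (x 0 : ℂ) • (1 : Matrix (Fin 2) (Fin 2) ℂ) - (x 1 : ℂ) • σ₁ - (x 2 : ℂ) • σ₂ -
    (x 3 : ℂ) • σ₃

/-- The Minkowski metric `η = diag (1, -1, -1, -1)`. -/
def η : Matrix (Fin 4) (Fin 4) ℝ := Matrix.diagonal ![1, -1, -1, -1]

/-! `X` identifies `ℝ⁴` with the Hermitian `2 × 2` matrices, and `det (X x)` is the Minkowski
form `xᵀ η x`. Conjugation `M ↦ A M Aᴴ` is `ℝ`-linear, preserves Hermitian matrices and, when
`det A = 1`, determinants; transported through `X` it is a linear map `L_A` of `ℝ⁴` preserving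
the Minkowski form, whence `L_Aᵀ η L_A = η` by polarization. Uniqueness and multiplicativity
come from the injectivity of `X`. -/

lemma Matrix.IsSymm.ext_of_dotProduct_mulVec {n R : Type*} [Fintype n] [DecidableEq n]
    [CommRing R] [Invertible (2 : R)] {S T : Matrix n n R} (hS : S.IsSymm) (hT : T.IsSymm)
    (h : ∀ x, x ⬝ᵥ S *ᵥ x = x ⬝ᵥ T *ᵥ x) : S = T := by
  ext i j
  have hij := h (Pi.single i 1 + Pi.single j 1)
  have hi := h (Pi.single i 1)
  have hj := h (Pi.single j 1)
  simp only [mulVec_add, add_dotProduct, dotProduct_add, mulVec_single, single_dotProduct,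
    MulOpposite.op_one, one_smul, one_mul, col_apply] at hij hi hj
  rw [hS.apply i j, hT.apply i j] at hij
  have h2 : 2 * S i j = 2 * T i j := by linear_combination hij - hi - hj
  exact (isUnit_of_invertible (2 : R)).mul_left_cancel h2

lemma X_eq (x : Fin 4 → ℝ) :
    X x = !![(x 0 - x 3 : ℂ), -(x 1 : ℂ) + (x 2 : ℂ) * Complex.I;
             -(x 1 : ℂ) - (x 2 : ℂ) * Complex.I, (x 0 : ℂ) + (x 3 : ℂ)] := by
  ext i j
  fin_cases i <;> fin_cases j <;> simp [X, σ₁, σ₂, σ₃, one_apply]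

lemma X_injective : Function.Injective X := by
  intro x y h
  rw [X_eq, X_eq] at h
  have h00 := congrFun (congrFun h 0) 0
  have h01 := congrFun (congrFun h 0) 1
  have h11 := congrFun (congrFun h 1) 1
  simp [Complex.ext_iff] at h00 h01 h11
  funext i
  fin_cases i <;> simp <;> linarith

lemma isHermitian_X (x : Fin 4 → ℝ) : (X x).IsHermitian := by
  rw [IsHermitian, X_eq]
  ext i j
  fin_cases i <;> fin_cases j <;> simp [Complex.ext_iff]

noncomputable def Xₗ : (Fin 4 → ℝ) →ₗ[ℝ] Matrix (Fin 2) (Fin 2) ℂ where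
  toFun := X
  map_add' x y := by
    simp only [X, Pi.add_apply, Complex.ofReal_add, add_smul]
    abel
  map_smul' c x := by
    simp only [X, Pi.smul_apply, smul_eq_mul, Complex.ofReal_mul, mul_smul, smul_sub,
      RingHom.id_apply, Complex.coe_smul]

/-- Inverse of `X` on Hermitian matrices. -/
noncomputable def pauliCoords : Matrix (Fin 2) (Fin 2) ℂ →ₗ[ℝ] Fin 4 → ℝ where
  toFun M := ![((M 0 0).re + (M 1 1).re) / 2, -(M 0 1).re, (M 0 1).im,
    ((M 1 1).re - (M 0 0).re) / 2]
  map_add' M N := by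
    ext i
    fin_cases i <;> simp <;> ring
  map_smul' c M := by
    ext i
    fin_cases i <;> simp <;> ring

lemma X_pauliCoords {M : Matrix (Fin 2) (Fin 2) ℂ} (hM : M.IsHermitian) :
    X (pauliCoords M) = M := by
  have h00 := hM.apply 0 0
  have h11 := hM.apply 1 1
  have h10 := hM.apply 0 1
  simp only [Complex.ext_iff, RCLike.star_def, Complex.conj_re, Complex.conj_im] at h00 h11 h10
  rw [X_eq]
  ext i j
  fin_cases i <;> fin_cases j <;> simp [pauliCoords, Complex.ext_iff] <;>
    (try constructor) <;> linarith [h00.2, h11.2, h10.1, h10.2]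

lemma dotProduct_η_mulVec (x : Fin 4 → ℝ) :
    x ⬝ᵥ η *ᵥ x = x 0 ^ 2 - x 1 ^ 2 - x 2 ^ 2 - x 3 ^ 2 := by
  simp [η, dotProduct, mulVec_diagonal, Fin.sum_univ_four]
  ring

lemma det_X (x : Fin 4 → ℝ) : (X x).det = ((x ⬝ᵥ η *ᵥ x : ℝ) : ℂ) := by
  rw [X_eq, det_fin_two_of, dotProduct_η_mulVec]
  push_cast
  linear_combination ((x 2 : ℂ) ^ 2) * Complex.I_sq

def Induces (A : Matrix (Fin 2) (Fin 2) ℂ) (L : Matrix (Fin 4) (Fin 4) ℝ) : Prop :=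
  ∀ x, A * X x * Aᴴ = X (L *ᵥ x)

lemma exists_induces (A : Matrix (Fin 2) (Fin 2) ℂ) : ∃ L, Induces A L :=
  ⟨LinearMap.toMatrix' (pauliCoords ∘ₗ LinearMap.mulRight ℝ Aᴴ ∘ₗ LinearMap.mulLeft ℝ A ∘ₗ Xₗ),
    fun x => by
      rw [LinearMap.toMatrix'_mulVec]
      exact (X_pauliCoords (isHermitian_mul_mul_conjTranspose A (isHermitian_X x))).symm⟩

namespace Induces

variable {A B : Matrix (Fin 2) (Fin 2) ℂ} {L L' : Matrix (Fin 4) (Fin 4) ℝ}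

lemma unique (hL : Induces A L) (hL' : Induces A L') : L = L' :=
  ext_iff_mulVec.2 fun x => X_injective ((hL x).symm.trans (hL' x))

lemma mul (hA : Induces A L) (hB : Induces B L') : Induces (A * B) (L * L') := fun x => by
  rw [conjTranspose_mul, ← mulVec_mulVec, ← hA, ← hB]
  simp only [Matrix.mul_assoc]

lemma transpose_mul_η_mul_self (hA : A.det = 1) (hL : Induces A L) : Lᵀ * η * L = η := by
  have hη : η.IsSymm := isSymm_diagonal _
  refine IsSymm.ext_of_dotProduct_mulVec ?_ hη fun x => ?_
  · simp only [IsSymm, transpose_mul, hη.eq, transpose_transpose, Matrix.mul_assoc]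
  · have hdet := congrArg det (hL x)
    rw [det_mul, det_mul, det_conjTranspose, hA, star_one, one_mul, mul_one, det_X, det_X] at hdet
    calc x ⬝ᵥ (Lᵀ * η * L) *ᵥ x = (L *ᵥ x) ⬝ᵥ η *ᵥ (L *ᵥ x) := by
          rw [← mulVec_mulVec, ← mulVec_mulVec, dotProduct_mulVec, vecMul_transpose]
      _ = x ⬝ᵥ η *ᵥ x := by exact_mod_cast hdet.symm

end Induces

/-- **The homomorphism from SL(2, ℂ) to the Lorentz group.**
(a) For every `A ∈ SL(2, ℂ)` there is a unique real `4 × 4` matrix `L_A` with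
`A (X x) Aᴴ = X (L_A x)` for all `x`; (b) any such `L_A` is a Lorentz transformation,
`L_Aᵀ η L_A = η`; and (c) the assignment `A ↦ L_A` is multiplicative. -/
theorem sl2C_to_lorentz :
    (∀ A : Matrix (Fin 2) (Fin 2) ℂ, A.det = 1 →
      ∃! L : Matrix (Fin 4) (Fin 4) ℝ, ∀ x : Fin 4 → ℝ, A * X x * Aᴴ = X (L *ᵥ x)) ∧
    (∀ A : Matrix (Fin 2) (Fin 2) ℂ, A.det = 1 →
      ∀ L : Matrix (Fin 4) (Fin 4) ℝ,
        (∀ x : Fin 4 → ℝ, A * X x * Aᴴ = X (L *ᵥ x)) → Lᵀ * η * L = η) ∧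
    (∀ A B : Matrix (Fin 2) (Fin 2) ℂ, A.det = 1 → B.det = 1 →
      ∀ LA LB LAB : Matrix (Fin 4) (Fin 4) ℝ,
        (∀ x : Fin 4 → ℝ, A * X x * Aᴴ = X (LA *ᵥ x)) →
        (∀ x : Fin 4 → ℝ, B * X x * Bᴴ = X (LB *ᵥ x)) →
        (∀ x : Fin 4 → ℝ, (A * B) * X x * (A * B)ᴴ = X (LAB *ᵥ x)) →
        LAB = LA * LB) := by
  refine ⟨fun A _ => ?_, fun A hA L hL => Induces.transpose_mul_η_mul_self hA hL,
    fun A B _ _ LA LB LAB hLA hLB hLAB => Induces.unique hLAB (Induces.mul hLA hLB)⟩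
  obtain ⟨L, hL⟩ := exists_induces A
  exact ⟨L, hL, fun L' hL' => Induces.unique hL' hL⟩
end
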